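/- arXiv:math/0207243 — 2 statements merged into one kernel-verified Lean document; each statement's English description precedes it below -/
import Mathlib

section
/- For every k-valued Hochschild p-cochain f and q-cochain g of A, the composition operation satisfies f̂ ∘ ĝ = (f ∘ ĝ)^, where F ∘ G = Σ_{i=1}^{p} (−1)^{q(i−1)} F ∘ᵢ G and f ∘ ĝ = Σ_{i=1}^{p} (−1)^{q(i−1)} f ∘ᵢ ĝ. -/
noncomputable section HochschildHopf

open scoped TensorProduct BigOperators

/-- Merging of the entries `i` and `i+1` of a `(p+1)`-tuple by multiplication,
yielding a `p`-tuple; this encodes the inner terms of the Hochschild differential. -/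
def hochContract {A : Type*} [Ring A] {p : ℕ} (a : Fin (p + 1) → A) (i : Fin p) :
    Fin p → A :=
  fun j =>
    if (j : ℕ) < (i : ℕ) then a j.castSucc
    else if j = i then a j.castSucc * a j.succ
    else a j.succ

/-- The Hochschild differential on `k`-valued `p`-cochains of a Hopf algebra `A`
(the `A`-bimodule structure on `k` is given on both sides by the counit `ε`):
`(∂f)(a⁰,…,aᵖ) = ε(a⁰)f(a¹,…,aᵖ) + Σᵢ (-1)^(i+1) f(a⁰,…,aⁱaⁱ⁺¹,…,aᵖ)
  + (-1)^(p+1) f(a⁰,…,aᵖ⁻¹)ε(aᵖ)`. -/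
def hochDK {k A : Type*} [Field k] [Ring A] [HopfAlgebra k A]
    (p : ℕ) (f : (Fin p → A) → k) : (Fin (p + 1) → A) → k :=
  fun a =>
    Coalgebra.counit (a 0) * f (Fin.tail a)
      + ∑ i : Fin p, (-1 : k) ^ ((i : ℕ) + 1) * f (hochContract a i)
      + (-1 : k) ^ (p + 1) * (f (Fin.init a) * Coalgebra.counit (a (Fin.last p)))

/-- The Hochschild differential on `A`-valued `p`-cochains of `A`:
`(∂F)(a⁰,…,aᵖ) = a⁰·F(a¹,…,aᵖ) + Σᵢ (-1)^(i+1) F(a⁰,…,aⁱaⁱ⁺¹,…,aᵖ)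
  + (-1)^(p+1) F(a⁰,…,aᵖ⁻¹)·aᵖ`. -/
def hochDA (k : Type*) {A : Type*} [Field k] [Ring A] [HopfAlgebra k A]
    (p : ℕ) (F : (Fin p → A) → A) : (Fin (p + 1) → A) → A :=
  fun a =>
    a 0 * F (Fin.tail a)
      + ∑ i : Fin p, (-1 : k) ^ ((i : ℕ) + 1) • F (hochContract a i)
      + (-1 : k) ^ (p + 1) • (F (Fin.init a) * a (Fin.last p))

/-- Cup product of `k`-valued cochains:
`(f ⌣ g)(a¹,…,a^{p+q}) = f(a¹,…,aᵖ) g(a^{p+1},…,a^{p+q})`. -/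
def cupK {k A : Type*} [Field k] [Ring A] [HopfAlgebra k A]
    (p q : ℕ) (f : (Fin p → A) → k) (g : (Fin q → A) → k) :
    (Fin (p + q) → A) → k :=
  fun a => f (fun i => a (Fin.castAdd q i)) * g (fun j => a (Fin.natAdd p j))

/-- Cup product of `A`-valued cochains. -/
def cupA {A : Type*} [Ring A]
    (p q : ℕ) (F : (Fin p → A) → A) (G : (Fin q → A) → A) :
    (Fin (p + q) → A) → A :=
  fun a => F (fun i => a (Fin.castAdd q i)) * G (fun j => a (Fin.natAdd p j))

/-- The brace operation `f ∘ᵢ G` (here `i` is 0-indexed): insert the value of the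
`A`-valued `q`-cochain `G` into the `i`-th slot of the `p`-cochain `f`
(with values in `M`), producing a `(p+q-1)`-cochain. -/
def braceIns {A M : Type*} [Ring A] (p q : ℕ) (f : (Fin p → A) → M) (i : Fin p)
    (G : (Fin q → A) → A) : (Fin (p + q - 1) → A) → M :=
  fun c => f (fun j =>
    if _h : (j : ℕ) < (i : ℕ) then
      c ⟨(j : ℕ), by have := j.isLt; have := i.isLt; omega⟩
    else if _h' : (j : ℕ) = (i : ℕ) then
      G (fun l => c ⟨(i : ℕ) + (l : ℕ), by have := i.isLt; have := l.isLt; omega⟩)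
    else
      c ⟨(j : ℕ) + q - 1, by have := j.isLt; have := i.isLt; omega⟩)

/-- The composition operation `f ∘ G = Σ_{i=1}^{p} (-1)^{q(i-1)} f ∘ᵢ G`
(with the 0-indexed convention the sign is `(-1)^{q·i}`). -/
def composeIns (k : Type*) {A M : Type*} [Field k] [Ring A] [HopfAlgebra k A]
    [AddCommMonoid M] [Module k M] (p q : ℕ) (f : (Fin p → A) → M)
    (G : (Fin q → A) → A) : (Fin (p + q - 1) → A) → M :=
  fun c => ∑ i : Fin p, (-1 : k) ^ (q * (i : ℕ)) • braceIns p q f i G c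

end HochschildHopf


noncomputable section HatSection

open scoped TensorProduct

variable {k A : Type*} [Field k] [Ring A] [HopfAlgebra k A]

set_option maxHeartbeats 1600000 in
/-- The linear map `f ↦ f̂` from `k`-valued multilinear `p`-cochains to `A`-valued
multilinear `p`-cochains of the Hopf algebra `A`, given in Sweedler notation by
`f̂(a¹,…,aᵖ) = a¹₍₁₎⋯aᵖ₍₁₎ • f(a¹₍₂₎,…,aᵖ₍₂₎)` (it is defined here by recursion on `p`,
comultiplying the first entry). -/
def hatAux : ∀ p : ℕ,
    MultilinearMap k (fun _ : Fin p => A) k →ₗ[k] MultilinearMap k (fun _ : Fin p => A) A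
  | 0 =>
    { toFun := fun f => MultilinearMap.constOfIsEmpty k _ (algebraMap k A (f Fin.elim0))
      map_add' := fun f g => by
        ext a
        simp [MultilinearMap.constOfIsEmpty]
      map_smul' := fun c f => by
        ext a
        simp [MultilinearMap.constOfIsEmpty, Algebra.smul_def] }
  | (p + 1) =>
    { toFun := fun f =>
        LinearMap.uncurryLeft
          ((TensorProduct.lift (LinearMap.mk₂ k
              (fun x y => x • (hatAux p (f.curryLeft y)))
              (fun x₁ x₂ y => add_smul x₁ x₂ _)
              (fun c x y => MultilinearMap.ext fun m => by
                simp [smul_mul_assoc])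
              (fun x y₁ y₂ => MultilinearMap.ext fun m => by
                simp [map_add, mul_add])
              (fun c x y => MultilinearMap.ext fun m => by
                simp [map_smul, mul_smul_comm]))).comp
            (Coalgebra.comul (R := k)))
      map_add' := fun f g => by
        ext a
        simp only [LinearMap.uncurryLeft_apply, LinearMap.comp_apply,
          MultilinearMap.add_apply]
        generalize Coalgebra.comul (R := k) (a 0) = t
        induction t using TensorProduct.induction_on with
        | zero => simp
        | tmul x y =>
          simp [show (f + g).curryLeft = f.curryLeft + g.curryLeft from rfl,
            smul_add, mul_add]
        | add s t hs ht =>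
          simp only [map_add, MultilinearMap.add_apply] at hs ht ⊢
          rw [hs, ht]; abel
      map_smul' := fun c f => by
        ext a
        simp only [LinearMap.uncurryLeft_apply, LinearMap.comp_apply,
          RingHom.id_apply, MultilinearMap.smul_apply]
        generalize Coalgebra.comul (R := k) (a 0) = t
        induction t using TensorProduct.induction_on with
        | zero => simp
        | tmul x y =>
          simp [show (c • f).curryLeft = c • f.curryLeft from rfl,
            mul_smul_comm]
        | add s t hs ht =>
          simp only [map_add, MultilinearMap.add_apply, smul_add] at hs ht ⊢
          rw [hs, ht] }

open Classical in
/-- `hat p f` is the `A`-valued Hochschild cochain `f̂` associated to a `k`-valued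
`k`-multilinear cochain `f`, `f̂(a¹,…,aᵖ) = a¹₍₁₎⋯aᵖ₍₁₎ • f(a¹₍₂₎,…,aᵖ₍₂₎)`;
on functions that are not multilinear it is defined to be `0`. -/
def hat (p : ℕ) (f : (Fin p → A) → k) : (Fin p → A) → A :=
  if h : ∃ g : MultilinearMap k (fun _ : Fin p => A) k, ⇑g = f then
    ⇑(hatAux p h.choose)
  else 0

end HatSection

/-!
For `b = (b¹,…,b^q)` write `b₍₁₎ = b¹₍₁₎⋯b^q₍₁₎`. Since `Δ` is multiplicative with `Δ 1 = 1 ⊗ 1`,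
the value of `ĝ` comultiplies as `Δ(ĝ(b)) = b₍₁₎ ⊗ ĝ(b₍₂₎)`. Feeding this into `f̂` gives
`f̂(…, ĝ(b), …) = ⋯ b₍₁₎ ⋯ f(…, ĝ(b₍₂₎), …) = (f ∘ᵢ ĝ)^(…, b, …)` for every slot `i`, and the
theorem is the signed sum of these identities.

As `f̂` is defined by recursion on the arity, comultiplying the first entry, the slot `i` is
reduced to the first one by peeling off the entries in front of it. For the first slot one
inducts on the arity of `g`, and coassociativity matches the two iterated comultiplications
of `b¹` that appear on the two sides.
-/

noncomputable section HatCompose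

open TensorProduct

section BraceArgs

variable {A : Type*} {p q : ℕ} (i : Fin p) (G : (Fin q → A) → A) (c : Fin (p + q - 1) → A)

def braceArgs : Fin p → A :=
  fun j =>
    if _h : (j : ℕ) < (i : ℕ) then
      c ⟨(j : ℕ), by have := j.isLt; have := i.isLt; omega⟩
    else if _h' : (j : ℕ) = (i : ℕ) then
      G (fun l => c ⟨(i : ℕ) + (l : ℕ), by have := i.isLt; have := l.isLt; omega⟩)
    else
      c ⟨(j : ℕ) + q - 1, by have := j.isLt; have := i.isLt; omega⟩

theorem braceIns_eq_apply_braceArgs {M : Type*} [Ring A] (f : (Fin p → A) → M) :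
    braceIns p q f i G c = f (braceArgs i G c) := rfl

variable (m : Fin (p + q - 1)) (x : A)

theorem braceArgs_update_of_lt (h : (m : ℕ) < i) :
    braceArgs i G (Function.update c m x)
      = Function.update (braceArgs i G c) ⟨m, by omega⟩ x := by
  funext j
  simp only [braceArgs, Function.update_apply, Fin.ext_iff]
  split_ifs <;> first | rfl | omega | (congr 1; funext l; rw [if_neg (by omega)])

theorem braceArgs_update_of_le_of_lt (h₁ : (i : ℕ) ≤ m) (h₂ : (m : ℕ) < i + q) :
    braceArgs i G (Function.update c m x)
      = Function.update (braceArgs i G c) i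
          (G (Function.update (fun l : Fin q => c ⟨i + l, by omega⟩) ⟨m - i, by omega⟩ x)) := by
  funext j
  simp only [braceArgs, Function.update_apply, Fin.ext_iff]
  split_ifs <;> first | rfl | omega | skip
  congr 1; funext l
  simp only [Function.update_apply, Fin.ext_iff]
  split_ifs <;> first | rfl | omega

theorem braceArgs_update_of_add_le (h : (i : ℕ) + q ≤ m) :
    braceArgs i G (Function.update c m x)
      = Function.update (braceArgs i G c) ⟨m + 1 - q, by omega⟩ x := by
  funext j
  simp only [braceArgs, Function.update_apply, Fin.ext_iff]
  split_ifs <;> first | rfl | omega | (congr 1; funext l; rw [if_neg (by omega)])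

theorem braceArgs_zero (G : (Fin q → A) → A) (c : Fin (p + 1 + q - 1) → A) :
    braceArgs 0 G c
      = Fin.cons (G fun l => c ⟨l, by omega⟩) (fun j : Fin p => c ⟨q + j, by omega⟩) := by
  funext j
  cases j using Fin.cases with
  | zero => simp [braceArgs]
  | succ j =>
    simp [braceArgs, show (j : ℕ) + 1 + q - 1 = q + j by omega]

theorem braceArgs_succ (j : Fin p) (G : (Fin q → A) → A) (c : Fin (p + 1 + q - 1) → A) :
    braceArgs j.succ G c
      = Fin.cons (c ⟨0, by have := j.pos; omega⟩)
          (braceArgs j G fun m => c ⟨m + 1, by omega⟩) := by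
  funext j'
  cases j' using Fin.cases with
  | zero => simp [braceArgs]
  | succ j' =>
    simp only [braceArgs, Fin.cons_succ, Fin.val_succ]
    split_ifs <;>
      first | rfl | omega | (congr 1; (try funext l); (try congr 1); (try ext); simp; omega)

end BraceArgs

section Brace

variable {R A M : Type*} [CommSemiring R] [Ring A] [Module R A] [AddCommMonoid M] [Module R M]

def braceMultilinear (p q : ℕ) (f : MultilinearMap R (fun _ : Fin p => A) M) (i : Fin p)
    (G : MultilinearMap R (fun _ : Fin q => A) A) :
    MultilinearMap R (fun _ : Fin (p + q - 1) => A) M where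
  toFun := braceIns p q f i G
  map_update_add' c m x y := by
    rcases Subsingleton.elim ‹DecidableEq _› (instDecidableEqFin _)
    simp only [braceIns_eq_apply_braceArgs]
    rcases Nat.lt_or_ge m i with h | h
    · simp only [braceArgs_update_of_lt _ _ _ _ _ h, f.map_update_add]
    rcases Nat.lt_or_ge m (i + q) with h' | h'
    · simp only [braceArgs_update_of_le_of_lt _ _ _ _ _ h h', G.map_update_add, f.map_update_add]
    · simp only [braceArgs_update_of_add_le _ _ _ _ _ h', f.map_update_add]
  map_update_smul' c m a x := by
    rcases Subsingleton.elim ‹DecidableEq _› (instDecidableEqFin _)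
    simp only [braceIns_eq_apply_braceArgs]
    rcases Nat.lt_or_ge m i with h | h
    · simp only [braceArgs_update_of_lt _ _ _ _ _ h, f.map_update_smul]
    rcases Nat.lt_or_ge m (i + q) with h' | h'
    · simp only [braceArgs_update_of_le_of_lt _ _ _ _ _ h h', G.map_update_smul, f.map_update_smul]
    · simp only [braceArgs_update_of_add_le _ _ _ _ _ h', f.map_update_smul]

theorem braceMultilinear_apply {p q : ℕ}
    (f : MultilinearMap R (fun _ : Fin p => A) M) (i : Fin p)
    (G : MultilinearMap R (fun _ : Fin q => A) A) (c : Fin (p + q - 1) → A) :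
    braceMultilinear p q f i G c = f (braceArgs i G c) := rfl

theorem braceMultilinear_succ_curryLeft {p q : ℕ}
    (h : p + 1 + q - 1 = p + q - 1 + 1) (f : MultilinearMap R (fun _ : Fin (p + 1) => A) M)
    (j : Fin p) (G : MultilinearMap R (fun _ : Fin q => A) A) (x : A) :
    ((braceMultilinear (p + 1) q f j.succ G).domDomCongr (finCongr h)).curryLeft x
      = braceMultilinear p q (f.curryLeft x) j G := by
  ext c
  rw [MultilinearMap.curryLeft_apply, MultilinearMap.domDomCongr_apply, braceMultilinear_apply,
    braceMultilinear_apply, braceArgs_succ, MultilinearMap.curryLeft_apply]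
  rfl

def braceHead (p q : ℕ) (f : MultilinearMap R (fun _ : Fin (p + 1) => A) M) :
    MultilinearMap R (fun _ : Fin q => A) A →ₗ[R]
      MultilinearMap R (fun _ : Fin (p + q) => A) M where
  toFun G := (braceMultilinear (p + 1) q f 0 G).domDomCongr (finCongr (by omega))
  map_add' G G' := by
    ext c
    simp only [MultilinearMap.domDomCongr_apply, braceMultilinear_apply, braceArgs_zero,
      add_apply, f.cons_add]
  map_smul' a G := by
    ext c
    simp only [MultilinearMap.domDomCongr_apply, braceMultilinear_apply, braceArgs_zero,
      smul_apply, f.cons_smul, RingHom.id_apply]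

theorem braceHead_apply {p q : ℕ}
    (f : MultilinearMap R (fun _ : Fin (p + 1) => A) M)
    (G : MultilinearMap R (fun _ : Fin q => A) A) (c : Fin (p + q) → A) :
    braceHead p q f G c
      = f (Fin.cons (G fun l => c ⟨l, by omega⟩) fun j : Fin p => c ⟨q + j, by omega⟩) := by
  simp only [braceHead, LinearMap.coe_mk, AddHom.coe_mk, MultilinearMap.domDomCongr_apply,
    braceMultilinear_apply, braceArgs_zero]
  rfl

theorem braceHead_curryLeft {p q : ℕ}
    (f : MultilinearMap R (fun _ : Fin (p + 1) => A) M)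
    (G : MultilinearMap R (fun _ : Fin (q + 1) => A) A) (x : A) :
    (braceHead p (q + 1) f G).curryLeft x = braceHead p q f (G.curryLeft x) := by
  ext (c : Fin (p + q) → A)
  rw [MultilinearMap.curryLeft_apply, braceHead_apply, braceHead_apply]
  congr 1
  funext j
  cases j using Fin.cases with
  | zero =>
    rw [Fin.cons_zero, Fin.cons_zero, MultilinearMap.curryLeft_apply]
    congr 1
    funext l
    cases l using Fin.cases <;> rfl
  | succ j =>
    simp only [Fin.cons_succ, show q + 1 + (j : ℕ) = q + j + 1 by omega]
    rfl

end Brace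

section MulLeftHead

variable {R A M : Type*} [CommSemiring R] [Ring A] [Algebra R A] [AddCommMonoid M] [Module R M]

def mulLeftHead {p : ℕ} (f : MultilinearMap R (fun _ : Fin (p + 1) => A) M) (w : A) :
    MultilinearMap R (fun _ : Fin (p + 1) => A) M :=
  LinearMap.uncurryLeft (f.curryLeft ∘ₗ LinearMap.mulLeft R w)

theorem mulLeftHead_apply {p : ℕ}
    (f : MultilinearMap R (fun _ : Fin (p + 1) => A) M) (w : A) (a : Fin (p + 1) → A) :
    mulLeftHead f w a = f (Fin.cons (w * a 0) (Fin.tail a)) := by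
  simp [mulLeftHead]

theorem braceHead_mulLeftHead {p q : ℕ}
    (f : MultilinearMap R (fun _ : Fin (p + 1) => A) M) (w : A)
    (G : MultilinearMap R (fun _ : Fin q => A) A) :
    braceHead p q (mulLeftHead f w) G = braceHead p q f (w • G) := by
  ext c
  simp only [braceHead_apply, mulLeftHead_apply, Fin.cons_zero, Fin.tail_cons, smul_apply,
    smul_eq_mul]

end MulLeftHead

section Hat

variable {k A : Type*} [Field k] [Ring A] [HopfAlgebra k A]

theorem composeIns_eq_sum_braceMultilinear {M : Type*} [AddCommMonoid M] [Module k M]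
    (p q : ℕ) (f : MultilinearMap k (fun _ : Fin p => A) M)
    (G : MultilinearMap k (fun _ : Fin q => A) A) :
    composeIns k p q f G
      = ⇑(∑ i : Fin p, (-1 : k) ^ (q * (i : ℕ)) • braceMultilinear p q f i G) := by
  funext c
  simp only [composeIns, sum_apply, smul_apply]
  rfl

def hatPeel (p : ℕ) (f : MultilinearMap k (fun _ : Fin (p + 1) => A) k) :
    A ⊗[k] A →ₗ[k] MultilinearMap k (fun _ : Fin p => A) A :=
  TensorProduct.lift (LinearMap.mk₂ k
    (fun x y => x • (hatAux p (f.curryLeft y)))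
    (fun _ _ _ => add_smul _ _ _)
    (fun _ _ _ => by ext; simp)
    (fun _ _ _ => by ext; simp)
    (fun _ _ _ => by ext; simp))

theorem hatAux_succ_apply (p : ℕ) (f : MultilinearMap k (fun _ : Fin (p + 1) => A) k)
    (a : Fin (p + 1) → A) :
    hatAux (p + 1) f a = hatPeel p f (Coalgebra.comul (a 0)) (Fin.tail a) := rfl

theorem hatAux_succ_curryLeft (p : ℕ) (f : MultilinearMap k (fun _ : Fin (p + 1) => A) k)
    (x : A) : (hatAux (p + 1) f).curryLeft x = hatPeel p f (Coalgebra.comul x) := by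
  rw [show hatAux (p + 1) f
      = LinearMap.uncurryLeft ((hatPeel p f).comp (Coalgebra.comul (R := k))) from rfl,
    LinearMap.curry_uncurryLeft]
  rfl

theorem hatPeel_tmul (p : ℕ) (f : MultilinearMap k (fun _ : Fin (p + 1) => A) k) (x y : A) :
    hatPeel p f (x ⊗ₜ y) = x • hatAux p (f.curryLeft y) := rfl

theorem hatAux_domDomCongr_finCongr {m n : ℕ} (h : m = n)
    (f : MultilinearMap k (fun _ : Fin m => A) k) (c : Fin n → A) :
    hatAux n (f.domDomCongr (finCongr h)) c = hatAux m f (c ∘ finCongr h) := by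
  subst h
  rfl

theorem hat_eq_hatAux (p : ℕ) (f : MultilinearMap k (fun _ : Fin p => A) k) :
    hat p f = hatAux p f := by
  have h : ∃ g : MultilinearMap k (fun _ : Fin p => A) k, ⇑g = f := ⟨f, rfl⟩
  rw [hat, dif_pos h, DFunLike.coe_injective h.choose_spec]

theorem hatAux_zero_apply (g : MultilinearMap k (fun _ : Fin 0 => A) k) (b : Fin 0 → A) :
    hatAux 0 g b = algebraMap k A (g b) := by
  rw [Subsingleton.elim b Fin.elim0]
  rfl

theorem hatPeel_tmul_mul (p : ℕ) (f : MultilinearMap k (fun _ : Fin (p + 1) => A) k)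
    (u w : A) (Z : A ⊗[k] A) :
    hatPeel p f ((u ⊗ₜ w) * Z) = u • hatPeel p (mulLeftHead f w) Z := by
  induction Z using TensorProduct.induction_on with
  | zero => simp
  | tmul z y =>
    ext r
    simp only [Algebra.TensorProduct.tmul_mul_tmul, hatPeel_tmul, smul_apply, smul_eq_mul,
      mulLeftHead, LinearMap.curry_uncurryLeft, LinearMap.comp_apply, LinearMap.mulLeft_apply,
      mul_assoc]
  | add Z₁ Z₂ h₁ h₂ => rw [mul_add, map_add, h₁, h₂, map_add, smul_add]

theorem braceHead_hatAux_zero {p : ℕ} (f : MultilinearMap k (fun _ : Fin (p + 1) => A) k)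
    (g : MultilinearMap k (fun _ : Fin 0 => A) k) :
    braceHead p 0 f (hatAux 0 g) = g Fin.elim0 • f.curryLeft 1 := by
  ext c
  rw [braceHead_apply, hatAux_zero_apply, Algebra.algebraMap_eq_smul_one, f.cons_smul,
    Subsingleton.elim (fun l : Fin 0 => c ⟨l, by omega⟩) Fin.elim0,
    show (fun j : Fin p => c ⟨0 + j, by omega⟩) = c from funext fun j => congrArg c (by simp)]
  rfl

/-- `w ⊗ y ↦ (f ∘₁ (w • (g(y, ·))^))^` -/
def hatBraceHead (p q : ℕ) (f : MultilinearMap k (fun _ : Fin (p + 1) => A) k)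
    (g : MultilinearMap k (fun _ : Fin (q + 1) => A) k) :
    A ⊗[k] A →ₗ[k] MultilinearMap k (fun _ : Fin (p + q) => A) A :=
  hatAux (p + q) ∘ₗ braceHead p q f ∘ₗ hatPeel q g

def smulHatBraceHead (p q : ℕ) (f : MultilinearMap k (fun _ : Fin (p + 1) => A) k)
    (g : MultilinearMap k (fun _ : Fin (q + 1) => A) k) :
    A ⊗[k] (A ⊗[k] A) →ₗ[k] MultilinearMap k (fun _ : Fin (p + q) => A) A :=
  TensorProduct.lift (LinearMap.mk₂ k (fun u E => u • hatBraceHead p q f g E)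
    (fun _ _ _ => add_smul _ _ _)
    (fun _ _ _ => by ext; simp)
    (fun _ _ _ => by rw [map_add, smul_add])
    (fun _ _ _ => by ext; simp))

theorem hatPeel_braceHead_hatAux (p q : ℕ) (f : MultilinearMap k (fun _ : Fin (p + 1) => A) k)
    (g : MultilinearMap k (fun _ : Fin (q + 1) => A) k) :
    hatPeel (p + q) (braceHead p (q + 1) f (hatAux (q + 1) g))
      = smulHatBraceHead p q f g ∘ₗ (Coalgebra.comul (R := k)).lTensor A := by
  refine TensorProduct.ext' fun u x => ?_
  rw [LinearMap.comp_apply, LinearMap.lTensor_tmul, hatPeel_tmul, braceHead_curryLeft,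
    hatAux_succ_curryLeft]
  rfl

theorem hatPeel_comul_hatAux (p q : ℕ) (f : MultilinearMap k (fun _ : Fin (p + 1) => A) k)
    (g : MultilinearMap k (fun _ : Fin q => A) k) (c : Fin (p + q) → A) :
    hatPeel p f (Coalgebra.comul (hatAux q g fun l => c ⟨l, by omega⟩))
        (fun j => c ⟨q + j, by omega⟩)
      = hatAux (p + q) (braceHead p q f (hatAux q g)) c := by
  induction q generalizing f with
  | zero =>
    rw [hatAux_zero_apply, Bialgebra.comul_algebraMap, Algebra.TensorProduct.algebraMap_apply,
      hatPeel_tmul, braceHead_hatAux_zero, map_smul, smul_apply, smul_apply, algebraMap_smul,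
      Subsingleton.elim (fun l : Fin 0 => c ⟨l, by omega⟩) Fin.elim0,
      show (fun j : Fin p => c ⟨0 + j, by omega⟩) = c from funext fun j => congrArg c (by simp)]
    rfl
  | succ q ih =>
    let c' : Fin (p + q) → A := Fin.tail c
    have hLeft (T : A ⊗[k] A) :
        hatPeel p f (Coalgebra.comul (hatPeel q g T fun l => c' ⟨l, by omega⟩))
            (fun j => c' ⟨q + j, by omega⟩)
          = smulHatBraceHead p q f g
              (TensorProduct.assoc k A A A ((Coalgebra.comul (R := k)).rTensor A T)) c' := by
      induction T using TensorProduct.induction_on with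
      | zero => simp
      | add T₁ T₂ h₁ h₂ => simp only [map_add, add_apply, h₁, h₂]
      | tmul x y =>
        rw [LinearMap.rTensor_tmul, hatPeel_tmul, smul_apply, smul_eq_mul, Bialgebra.comul_mul]
        induction Coalgebra.comul (R := k) x using TensorProduct.induction_on with
        | zero => simp
        | add S₁ S₂ h₁ h₂ =>
          simp only [add_mul, map_add, add_apply, h₁, h₂, TensorProduct.add_tmul]
        | tmul u w =>
          rw [hatPeel_tmul_mul, smul_apply, ih, TensorProduct.assoc_tmul, smulHatBraceHead,
            TensorProduct.lift.tmul, LinearMap.mk₂_apply, smul_apply, hatBraceHead,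
            LinearMap.comp_apply, LinearMap.comp_apply, hatPeel_tmul, braceHead_mulLeftHead]
    calc
      _ = hatPeel p f (Coalgebra.comul (hatPeel q g (Coalgebra.comul (c 0))
              fun l => c' ⟨l, by omega⟩)) (fun j => c' ⟨q + j, by omega⟩) := by
        congr 1
        funext j
        exact congrArg c (Fin.ext (by simp; omega))
      _ = smulHatBraceHead p q f g (TensorProduct.assoc k A A A
            ((Coalgebra.comul (R := k)).rTensor A (Coalgebra.comul (c 0)))) c' := hLeft _
      _ = smulHatBraceHead p q f g
            ((Coalgebra.comul (R := k)).lTensor A (Coalgebra.comul (c 0))) c' := by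
        rw [Coalgebra.coassoc_apply]
      _ = _ := by
        rw [← LinearMap.comp_apply, ← hatPeel_braceHead_hatAux]
        rfl

theorem hatAux_braceArgs (p q : ℕ) (f : MultilinearMap k (fun _ : Fin p => A) k)
    (g : MultilinearMap k (fun _ : Fin q => A) k) (i : Fin p) (c : Fin (p + q - 1) → A) :
    hatAux p f (braceArgs i (hatAux q g) c)
      = hatAux (p + q - 1) (braceMultilinear p q f i (hatAux q g)) c := by
  induction p with
  | zero => exact i.elim0
  | succ p ih =>
    cases i using Fin.cases with
    | zero =>
      rw [braceArgs_zero, hatAux_succ_apply, Fin.cons_zero, Fin.tail_cons]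
      exact (hatPeel_comul_hatAux p q f g (c ∘ finCongr (by omega))).trans
        (hatAux_domDomCongr_finCongr (by omega) _ _)
    | succ j =>
      have h : p + 1 + q - 1 = p + q - 1 + 1 := by have := j.pos; omega
      refine Eq.trans ?_ (hatAux_domDomCongr_finCongr h _ (c ∘ finCongr h.symm))
      rw [braceArgs_succ, hatAux_succ_apply, Fin.cons_zero, Fin.tail_cons, hatAux_succ_apply]
      change _ = hatPeel _ _ (Coalgebra.comul (c ⟨0, by omega⟩)) fun m => c ⟨m + 1, by omega⟩
      induction Coalgebra.comul (R := k) (c ⟨0, _⟩) using TensorProduct.induction_on with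
      | zero => simp
      | add T₁ T₂ h₁ h₂ => simp only [map_add, add_apply, h₁, h₂]
      | tmul x y =>
        rw [hatPeel_tmul, hatPeel_tmul, smul_apply, smul_apply, ih,
          braceMultilinear_succ_curryLeft]

end Hat

end HatCompose

section Statements

variable {k A : Type*} [Field k] [Ring A] [HopfAlgebra k A]

/-- For every `k`-valued `p`-cochain `f` and `q`-cochain `g`,
`f̂ ∘ ĝ = (f ∘ ĝ)^`, where `F ∘ G = Σ_{i=1}^{p} (-1)^{q(i-1)} F ∘ᵢ G`. -/
theorem hat_compose (p q : ℕ)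
    (f : MultilinearMap k (fun _ : Fin p => A) k)
    (g : MultilinearMap k (fun _ : Fin q => A) k) :
    composeIns k p q (hat p ⇑f) (hat q ⇑g)
      = hat (p + q - 1) (composeIns k p q ⇑f (hat q ⇑g)) := by
  rw [hat_eq_hatAux q, hat_eq_hatAux p, composeIns_eq_sum_braceMultilinear p q f, hat_eq_hatAux]
  funext c
  simp only [composeIns, braceIns_eq_apply_braceArgs, hatAux_braceArgs, map_sum, map_smul,
    sum_apply, smul_apply]

end Statements
end

section
/- Let f be a k-valued Hochschild p-cocycle of A (∂f = 0) and suppose the A-valued cocycle f̂ is a coboundary, i.e. f̂ = ∂G for some A-valued (p−1)-cochain G. Then f itself is a coboundary: f = ∂(ε∘G). Consequently the map induced by f ↦ f̂ from the Hochschild cohomology of A with values in k to the Hochschild cohomology of A with values in A is injective. -/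
section Statements

variable {k A : Type*} [Field k] [Ring A] [HopfAlgebra k A]

theorem counit_hatAux : ∀ (p : ℕ) (f : MultilinearMap k (fun _ : Fin p => A) k)
    (a : Fin p → A), Coalgebra.counit (R := k) (hatAux p f a) = f a
  | 0, f, a => by
    have ha : a = Fin.elim0 := Subsingleton.elim _ _
    subst ha
    simp [hatAux, MultilinearMap.constOfIsEmpty]
  | (p + 1), f, a => by
    have hrepr : hatAux (p + 1) f a =
        (TensorProduct.lift (LinearMap.mk₂ k
              (fun x y => x • ((hatAux p (f.curryLeft y))))
              (fun x₁ x₂ y => add_smul x₁ x₂ _)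
              (fun c x y => MultilinearMap.ext fun m => by
                simp [smul_mul_assoc])
              (fun x y₁ y₂ => MultilinearMap.ext fun m => by
                simp [map_add, mul_add])
              (fun c x y => MultilinearMap.ext fun m => by
                simp [map_smul, mul_smul_comm]))
          (Coalgebra.comul (R := k) (a 0))) (Fin.tail a) := rfl
    rw [hrepr]
    have key : ∀ t : TensorProduct k A A,
        Coalgebra.counit (R := k)
          ((TensorProduct.lift (LinearMap.mk₂ k
              (fun x y => x • ((hatAux p (f.curryLeft y))))
              (fun x₁ x₂ y => add_smul x₁ x₂ _)
              (fun c x y => MultilinearMap.ext fun m => by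
                simp [smul_mul_assoc])
              (fun x y₁ y₂ => MultilinearMap.ext fun m => by
                simp [map_add, mul_add])
              (fun c x y => MultilinearMap.ext fun m => by
                simp [map_smul, mul_smul_comm])) t) (Fin.tail a))
          = TensorProduct.lift (LinearMap.mk₂ k
              (fun (c : k) (y : A) => c * f.curryLeft y (Fin.tail a))
              (fun c₁ c₂ y => by ring)
              (fun s c y => by dsimp; ring)
              (fun c y₁ y₂ => by
                simp only [MultilinearMap.curryLeft_apply, MultilinearMap.cons_add]; ring)
              (fun s c y => by
                simp only [MultilinearMap.curryLeft_apply, MultilinearMap.cons_smul,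
                  smul_eq_mul]; ring))
            (LinearMap.rTensor A (Coalgebra.counit (R := k)) t) := by
      intro t
      induction t using TensorProduct.induction_on with
      | zero => simp
      | tmul x y =>
        simp only [TensorProduct.lift.tmul, LinearMap.mk₂_apply,
          MultilinearMap.smul_apply, LinearMap.rTensor_tmul, smul_eq_mul,
          Bialgebra.counit_mul]
        rw [counit_hatAux p]
      | add s t hs ht =>
        simp only [map_add, MultilinearMap.add_apply] at hs ht ⊢
        rw [hs, ht]
    rw [key, Coalgebra.rTensor_counit_comul]
    simp only [TensorProduct.lift.tmul, LinearMap.mk₂_apply, one_mul,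
      MultilinearMap.curryLeft_apply]
    rw [Fin.cons_self_tail]

theorem counit_hochDA (q : ℕ) (G : (Fin q → A) → A) (a : Fin (q + 1) → A) :
    Coalgebra.counit (R := k) (hochDA k q G a)
      = hochDK q (fun b => Coalgebra.counit (R := k) (G b)) a := by
  simp only [hochDA, hochDK, map_add, map_sum, map_smul, Bialgebra.counit_mul,
    smul_eq_mul]

/-- If `f` is a `k`-valued Hochschild `p`-cocycle such that the `A`-valued
cocycle `f̂` is a coboundary, say `f̂ = ∂G` for an `A`-valued `(p-1)`-cochain `G`, then `f`
itself is a coboundary: `f = ∂(ε ∘ G)`.  (Consequently the induced map from Hochschild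
cohomology with values in `k` to Hochschild cohomology with values in `A` is injective.) -/
theorem hat_injective_on_cohomology (p : ℕ)
    (f : MultilinearMap k (fun _ : Fin p => A) k)
    (G : MultilinearMap k (fun _ : Fin (p - 1) => A) A)
    (hf : hochDK p ⇑f = 0)
    (hG : ∀ a : Fin (p - 1 + 1) → A,
      hat p ⇑f (fun j => a ⟨(j : ℕ), by have := j.isLt; omega⟩)
        = hochDA k (p - 1) ⇑G a) :
    ∀ a : Fin (p - 1 + 1) → A,
      f (fun j => a ⟨(j : ℕ), by have := j.isLt; omega⟩)
        = hochDK (p - 1) (fun b => Coalgebra.counit (R := k) (G b)) a := by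
  intro a
  have hex : ∃ g : MultilinearMap k (fun _ : Fin p => A) k, ⇑g = ⇑f := ⟨f, rfl⟩
  have hmf : hat p ⇑f = ⇑(hatAux p f) := by
    rw [hat, dif_pos hex]
    rw [MultilinearMap.coe_injective hex.choose_spec]
  have h1 := congrArg (Coalgebra.counit (R := k)) (hG a)
  rw [hmf, counit_hatAux, counit_hochDA] at h1
  exact h1


end Statements
end
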